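/- If τ is the uniform density on [0, r₀], the spherical balancing equation (2α − 1)∫_{r*}^{r₀}(r − r*)τ dr = (1 − α)(∫_0^{r*}(r + r*)τ dr + ∫_{r*}^{r₀} 2r* τ dr) is solved by r*(α) = ((1 − √(1 + α − 2α²))/α) · r₀ for α ∈ (1/2, 1]. -/

import Mathlib

/-! For `τ = 1 / r₀` all three integrals are elementary, and clearing denominators turns the
balancing equation into the quadratic `α r² - 2 r₀ r + (2α - 1) r₀² = 0`, whose discriminant is
`4 r₀² (1 + α - 2α²)`. The closed form is its smaller root, and `1/2 ≤ α ≤ 1` is what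
places that root in `[0, r₀]`. -/

open intervalIntegral

/-- The closed-form solution of the balancing equation for the uniform density. -/
noncomputable def rstarUnif (α r₀ : ℝ) : ℝ := ((1 - Real.sqrt (1 + α - 2*α^2)) / α) * r₀

theorem balancing_uniform_iff {α r₀ : ℝ} (hr₀ : r₀ ≠ 0) (s : ℝ) :
    (2*α - 1) * (∫ r in s..r₀, (r - s) * (1/r₀)) =
      (1 - α) * ((∫ r in (0:ℝ)..s, (r + s) * (1/r₀)) + ∫ _ in s..r₀, 2 * s * (1/r₀)) ↔
    α * s^2 - 2 * r₀ * s + (2*α - 1) * r₀^2 = 0 := by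
  have outer : ∫ r in s..r₀, (r - s) * (1/r₀) = (r₀ - s)^2 / (2 * r₀) := by
    rw [integral_comp_sub_right (fun x => x * (1/r₀)), integral_mul_const, integral_id]
    field_simp
    ring
  have inner : ∫ r in (0:ℝ)..s, (r + s) * (1/r₀) = 3 * s^2 / (2 * r₀) := by
    rw [integral_comp_add_right (fun x => x * (1/r₀)), integral_mul_const, integral_id]
    field_simp
    ring
  rw [outer, inner, integral_const, smul_eq_mul]
  constructor <;> intro h <;> field_simp at h ⊢ <;> linear_combination h

theorem rstarUnif_quadratic_eq_zero {α : ℝ} (hα : α ≠ 0) (hdisc : 0 ≤ 1 + α - 2*α^2) (r₀ : ℝ) :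
    α * (rstarUnif α r₀)^2 - 2 * r₀ * rstarUnif α r₀ + (2*α - 1) * r₀^2 = 0 := by
  unfold rstarUnif
  have hsq := Real.sq_sqrt hdisc
  set d := Real.sqrt (1 + α - 2*α^2)
  field_simp
  linear_combination r₀^2 * hsq

theorem rstarUnif_mem_Icc {α r₀ : ℝ} (hα : α ∈ Set.Icc (1/2:ℝ) 1) (hr₀ : 0 ≤ r₀) :
    rstarUnif α r₀ ∈ Set.Icc 0 r₀ := by
  obtain ⟨hα₁, hα₂⟩ := hα
  have hαpos : 0 < α := by linarith
  have hdisc : 0 ≤ 1 + α - 2*α^2 := by nlinarith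
  set d := Real.sqrt (1 + α - 2*α^2)
  have hsq : d^2 = 1 + α - 2*α^2 := Real.sq_sqrt hdisc
  have hd₀ : 0 ≤ d := Real.sqrt_nonneg _
  have hd_le : d ≤ 1 := by nlinarith
  have hd_ge : 1 - α ≤ d := by nlinarith
  have hfactor : (1 - d) / α ∈ Set.Icc (0:ℝ) 1 :=
    ⟨div_nonneg (by linarith) hαpos.le, (div_le_one hαpos).2 (by linarith)⟩
  exact ⟨mul_nonneg hfactor.1 hr₀, mul_le_of_le_one_left hr₀ hfactor.2⟩

/-- For the uniform density `τ = 1/r₀` on `[0, r₀]`, the spherical balancing equation is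
solved by `r*(α) = ((1 − √(1 + α − 2α²))/α)·r₀`, which lies in `[0, r₀]`. -/
theorem stmt8 (r₀ : ℝ) (hr₀ : 0 < r₀) (α : ℝ) (hα : α ∈ Set.Ioc (1/2:ℝ) 1) :
    rstarUnif α r₀ ∈ Set.Icc 0 r₀ ∧
    (2*α - 1) * (∫ r in (rstarUnif α r₀)..r₀, (r - rstarUnif α r₀) * (1/r₀)) =
    (1 - α) * ((∫ r in (0:ℝ)..(rstarUnif α r₀), (r + rstarUnif α r₀) * (1/r₀)) +
      ∫ r in (rstarUnif α r₀)..r₀, 2 * rstarUnif α r₀ * (1/r₀)) := by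
  refine ⟨rstarUnif_mem_Icc (Set.Ioc_subset_Icc_self hα) hr₀.le, ?_⟩
  obtain ⟨hα₁, hα₂⟩ := hα
  rw [balancing_uniform_iff hr₀.ne']
  exact rstarUnif_quadratic_eq_zero (by linarith) (by nlinarith) r₀
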